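/- Let Z ⊂ ℙ₂ be a finite set of points not contained in any line. Then Z is contained in some Kronecker–Weierstrass variety of ℙ₂ whose distinguished point (in the case of type (0;2)) does not lie in Z, if and only if there exists a nonzero homogeneous quadratic form in k[z₀,z₁,z₂] vanishing on every point of Z. -/

import Mathlib

noncomputable section

open scoped BigOperators

/-- The set of points of `ℙ_n = ℙ(k^{n+1})` lying in the projectivization of the
linear subspace `W ⊆ k^{n+1}`. -/
def projSet (k : Type*) [Field k] {n : ℕ} (W : Submodule k (Fin (n + 1) → k)) :
    Set (Projectivization k (Fin (n + 1) → k)) :=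
  {x | x.rep ∈ W}

/-- `C ⊆ ℙ_n` is a rational normal curve of degree `d`, spanning the `d`-dimensional
linear subspace of `ℙ_n` given by the `(d+1)`-dimensional subspace `L ⊆ k^{n+1}`:
namely, `C` is the image of the degree-`d` Veronese map `ℙ¹ → ℙ_n` composed with an
injective linear map `A : k^{d+1} → k^{n+1}`, and `L = im A`. -/
def IsRNC (k : Type*) [Field k] (n d : ℕ)
    (C : Set (Projectivization k (Fin (n + 1) → k)))
    (L : Submodule k (Fin (n + 1) → k)) : Prop :=
  ∃ A : (Fin (d + 1) → k) →ₗ[k] (Fin (n + 1) → k), Function.Injective A ∧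
    L = LinearMap.range A ∧
    C = {x | ∃ s t c : k, c ≠ 0 ∧
          c • x.rep = A fun i => s ^ (d - (i : ℕ)) * t ^ (i : ℕ)}

/-- `Y ⊆ ℙ_n` is a Kronecker–Weierstrass variety of type `(d;s)` with `d ≥ 1` and
curve part `C`: there are integers `n₁, …, n_s` with `1 ≤ nᵢ ≤ n - 1` and
`d + n₁ + ⋯ + n_s = n`, a rational normal curve `C` of degree `d` spanning a
`d`-dimensional linear subspace `L`, and linear subspaces `Lᵢ` of dimension `nᵢ`,
such that each `L ∩ Lᵢ` is a single point lying on `C`, the `Lᵢ` are pairwise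
disjoint, and `Y = C ∪ L₁ ∪ ⋯ ∪ L_s`. -/
def IsKWpos (k : Type*) [Field k] (n d s : ℕ)
    (Y C : Set (Projectivization k (Fin (n + 1) → k))) : Prop :=
  1 ≤ d ∧
  ∃ (nn : Fin s → ℕ) (L : Submodule k (Fin (n + 1) → k))
    (W : Fin s → Submodule k (Fin (n + 1) → k)),
    (∀ i, 1 ≤ nn i ∧ nn i ≤ n - 1) ∧ (d + ∑ i, nn i = n) ∧
    IsRNC k n d C L ∧
    (∀ i, Module.finrank k (W i) = nn i + 1) ∧
    (∀ i, ∃ p ∈ C, projSet k L ∩ projSet k (W i) = {p}) ∧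
    (∀ i j, i ≠ j → projSet k (W i) ∩ projSet k (W j) = ∅) ∧
    Y = C ∪ ⋃ i, projSet k (W i)

/-- `Y ⊆ ℙ_n` is a Kronecker–Weierstrass variety of type `(0;s)` with distinguished
point `y`: there are integers `n₁, …, n_s` with `1 ≤ nᵢ ≤ n - 1` and
`n₁ + ⋯ + n_s = n`, and linear subspaces `Lᵢ` of dimension `nᵢ`, all passing
through `y`, any two of which meet exactly at `y`, with `Y = L₁ ∪ ⋯ ∪ L_s`. -/
def IsKW0 (k : Type*) [Field k] (n s : ℕ)
    (Y : Set (Projectivization k (Fin (n + 1) → k)))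
    (y : Projectivization k (Fin (n + 1) → k)) : Prop :=
  ∃ (nn : Fin s → ℕ) (W : Fin s → Submodule k (Fin (n + 1) → k)),
    (∀ i, 1 ≤ nn i ∧ nn i ≤ n - 1) ∧ (∑ i, nn i = n) ∧
    (∀ i, Module.finrank k (W i) = nn i + 1) ∧
    (∀ i, y ∈ projSet k (W i)) ∧
    (∀ i j, i ≠ j → projSet k (W i) ∩ projSet k (W j) = {y}) ∧
    Y = ⋃ i, projSet k (W i)

/-!
A Kronecker–Weierstrass variety of `ℙ₂` is a smooth conic or a pair of lines, so it lies on the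
conic `ℓ₁ℓ₂ = 0` for two linear forms, or on `ℓ₀ℓ₂ - ℓ₁² = 0` where `ℓ` are the coordinates
inverse to a parametrization `A (s², st, t²)` of the conic.

Conversely, over an algebraically closed field every ternary quadratic form becomes, after a
linear change of coordinates, either a product of two linear forms or `v₀v₂ - v₁²`: move an
isotropic vector to `e₀`, then complete step by step. Only roots of quadratic polynomials are
needed, so this works in every characteristic. If `Z` lies on two lines, they are distinct as `Z`
is not collinear, and form a variety of type `(1;1)`; every zero of `v₀v₂ - v₁²` is a multiple of
`(s², st, t²)`, so otherwise `Z` lies on a smooth conic.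
-/

open MvPolynomial Matrix

section LinearAlgebra

variable {k : Type*} [Field k]

theorem exists_quadratic_root [IsAlgClosed k] {a : k} (ha : a ≠ 0) (b c : k) :
    ∃ x, a * x ^ 2 + b * x + c = 0 := by
  obtain ⟨x, hx⟩ := IsAlgClosed.exists_root
    (Polynomial.C a * Polynomial.X ^ 2 + Polynomial.C b * Polynomial.X + Polynomial.C c)
    (by rw [Polynomial.degree_quadratic ha]; norm_num)
  exact ⟨x, by simpa using hx⟩

theorem finrank_inf_add_two_of_ne {V : Type*} [AddCommGroup V] [Module k V]
    [FiniteDimensional k V] {L W : Submodule k V}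
    (hL : Module.finrank k L + 1 = Module.finrank k V)
    (hW : Module.finrank k W + 1 = Module.finrank k V) (hne : L ≠ W) :
    Module.finrank k ↥(L ⊓ W) + 2 = Module.finrank k V := by
  have hlt : L < L ⊔ W := by
    refine lt_of_le_of_ne le_sup_left fun h => hne ?_
    exact (Submodule.eq_of_le_of_finrank_eq (h ▸ le_sup_right : W ≤ L) (by omega)).symm
  have hsup : Module.finrank k ↥(L ⊔ W) = Module.finrank k V := by
    have := Submodule.finrank_lt_finrank_of_lt hlt
    have := Submodule.finrank_le (L ⊔ W)
    omega
  have := Submodule.finrank_sup_add_finrank_inf_eq L W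
  omega

variable {ι : Type*} [Fintype ι] [DecidableEq ι]

theorem finrank_ker_dotProductEquiv_add_one {a : ι → k} (ha : a ≠ 0) :
    Module.finrank k (LinearMap.ker (dotProductEquiv k ι a)) + 1 = Fintype.card ι := by
  rw [Module.Dual.finrank_ker_add_one_of_ne_zero
      ((LinearEquiv.map_ne_zero_iff (dotProductEquiv k ι)).mpr ha),
    Module.finrank_fintype_fun_eq_card]

theorem exists_dotProduct_eq_zero_of_ne_top {W : Submodule k (ι → k)} (hW : W ≠ ⊤) :
    ∃ a ≠ 0, ∀ v ∈ W, a ⬝ᵥ v = 0 := by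
  obtain ⟨f, hf, hWf⟩ := W.exists_le_ker_of_lt_top hW.lt_top
  refine ⟨(dotProductEquiv k ι).symm f, by simpa using hf, fun v hv => ?_⟩
  rw [← dotProductEquiv_apply_apply, LinearEquiv.apply_symm_apply]
  exact hWf hv

theorem exists_quadric_vanishing_on_union {W₁ W₂ : Submodule k (ι → k)} (h₁ : W₁ ≠ ⊤)
    (h₂ : W₂ ≠ ⊤) : ∃ q : MvPolynomial ι k, q ≠ 0 ∧ q.IsHomogeneous 2 ∧
      ∀ v, v ∈ W₁ ∨ v ∈ W₂ → eval v q = 0 := by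
  obtain ⟨a, ha, hWa⟩ := exists_dotProduct_eq_zero_of_ne_top h₁
  obtain ⟨b, hb, hWb⟩ := exists_dotProduct_eq_zero_of_ne_top h₂
  let P : Matrix (Fin 2) ι k := Matrix.of ![a, b]
  have hP (i : Fin 2) (hi : P i ≠ 0) : P.toMvPolynomial i ≠ 0 := fun h =>
    hi (dotProduct_eq_zero _ fun v => by
      simpa [h, mulVec] using (P.toMvPolynomial_eval_eq_apply i v).symm)
  refine ⟨P.toMvPolynomial 0 * P.toMvPolynomial 1, mul_ne_zero (hP 0 ha) (hP 1 hb),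
    (P.toMvPolynomial_isHomogeneous 0).mul (P.toMvPolynomial_isHomogeneous 1), ?_⟩
  rintro v (hv | hv) <;> simp [toMvPolynomial_eval_eq_apply, mulVec, P, hWa v, hWb v, hv]

end LinearAlgebra

section QuadraticForm

variable {k : Type*} [Field k]

def quadForm (a b c d e f : k) (v : Fin 3 → k) : k :=
  a * v 0 ^ 2 + b * (v 0 * v 1) + c * (v 0 * v 2) + d * v 1 ^ 2 + e * (v 1 * v 2) + f * v 2 ^ 2

theorem support_subset_of_isHomogeneous_two {q : MvPolynomial (Fin 3) k}
    (hq : q.IsHomogeneous 2) :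
    q.support ⊆ {Finsupp.single 0 2, Finsupp.single 0 1 + Finsupp.single 1 1,
      Finsupp.single 0 1 + Finsupp.single 2 1, Finsupp.single 1 2,
      Finsupp.single 1 1 + Finsupp.single 2 1, Finsupp.single 2 2} := by
  intro d hd
  have hdeg : d 0 + d 1 + d 2 = 2 := by
    simpa [Finsupp.weight_apply, Finsupp.sum_fintype, Fin.sum_univ_three]
      using hq (mem_support_iff.mp hd)
  have : d 0 = 2 ∧ d 1 = 0 ∧ d 2 = 0 ∨ d 0 = 1 ∧ d 1 = 1 ∧ d 2 = 0 ∨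
      d 0 = 1 ∧ d 1 = 0 ∧ d 2 = 1 ∨ d 0 = 0 ∧ d 1 = 2 ∧ d 2 = 0 ∨
      d 0 = 0 ∧ d 1 = 1 ∧ d 2 = 1 ∨ d 0 = 0 ∧ d 1 = 0 ∧ d 2 = 2 := by
    omega
  simpa [Finsupp.ext_iff, Fin.forall_fin_succ, Finsupp.single_apply] using this

theorem eval_eq_quadForm {q : MvPolynomial (Fin 3) k} (hq : q.IsHomogeneous 2) (v : Fin 3 → k) :
    eval v q = quadForm (coeff (Finsupp.single 0 2) q)
      (coeff (Finsupp.single 0 1 + Finsupp.single 1 1) q)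
      (coeff (Finsupp.single 0 1 + Finsupp.single 2 1) q) (coeff (Finsupp.single 1 2) q)
      (coeff (Finsupp.single 1 1 + Finsupp.single 2 1) q) (coeff (Finsupp.single 2 2) q) v := by
  rw [eval_eq', Finset.sum_subset (support_subset_of_isHomogeneous_two hq)
    fun d _ hd => by simp [notMem_support_iff.mp hd]]
  simp [Finset.sum_insert, Finsupp.ext_iff, Fin.forall_fin_succ, Fin.prod_univ_three, quadForm,
    add_assoc]

def SplitsOrConic (Q : (Fin 3 → k) → k) : Prop :=
  (∃ a b : Fin 3 → k, ∀ v, Q v = (a ⬝ᵥ v) * (b ⬝ᵥ v)) ∨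
    ∃ A : (Fin 3 → k) ≃ₗ[k] (Fin 3 → k), ∀ v, Q (A v) = v 0 * v 2 - v 1 ^ 2

theorem SplitsOrConic.of_mulVec {Q Q' : (Fin 3 → k) → k} (M : Matrix (Fin 3) (Fin 3) k)
    (hM : M.det ≠ 0) (hQ : ∀ v, Q (M *ᵥ v) = Q' v) (h : SplitsOrConic Q') :
    SplitsOrConic Q := by
  have hMM (v : Fin 3 → k) : M *ᵥ (M⁻¹ *ᵥ v) = v := by
    rw [mulVec_mulVec, mul_nonsing_inv M hM.isUnit, one_mulVec]
  rcases h with ⟨a, b, hab⟩ | ⟨A, hA⟩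
  · refine .inl ⟨a ᵥ* M⁻¹, b ᵥ* M⁻¹, fun v => ?_⟩
    rw [← dotProduct_mulVec, ← dotProduct_mulVec, ← hab, ← hQ, hMM]
  · exact .inr ⟨A.trans (M.toLinearEquiv' (M.invertibleOfIsUnitDet hM.isUnit)),
      fun v => (hQ (A v)).trans (hA v)⟩

variable [IsAlgClosed k]

theorem splitsOrConic_normal (γ : k) : SplitsOrConic fun v => v 0 * v 2 + γ * v 1 ^ 2 := by
  rcases eq_or_ne γ 0 with rfl | hγ
  · exact .inl ⟨![1, 0, 0], ![0, 0, 1], fun v => by simp [dotProduct, Fin.sum_univ_three]⟩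
  obtain ⟨μ, hμ⟩ := exists_quadratic_root hγ 0 1
  refine .of_mulVec (Q' := fun v => v 0 * v 2 - v 1 ^ 2) (diagonal ![1, μ, 1]) ?_ (fun v => ?_)
    (.inr ⟨LinearEquiv.refl k _, fun v => rfl⟩)
  · simpa [det_diagonal, Fin.prod_univ_three] using fun h : μ = 0 => by simp [h] at hμ
  · simp only [mulVec_diagonal, cons_val_zero, cons_val_one, cons_val]
    linear_combination v 1 ^ 2 * hμ

/- The substitution `v₂ = (w₂ - b w₁) / c` turns `v₀ (b v₁ + c v₂)` into `v₀ w₂`; shifting `v₀`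
by multiples of `w₁` and `w₂` then absorbs the remaining `w₁ w₂` and `w₂²` terms. -/
theorem splitsOrConic_quadForm_of_ne_zero (b c d e f : k) (hc : c ≠ 0) :
    SplitsOrConic (quadForm 0 b c d e f) := by
  refine .of_mulVec !![1, -(e / c - 2 * f * b / c ^ 2), -(f / c ^ 2); 0, 1, 0; 0, -(b / c), 1 / c]
    ?_ (fun v => ?_) (splitsOrConic_normal (d - e * b / c + f * b ^ 2 / c ^ 2))
  · simp [det_fin_three, hc]
  · simp only [quadForm, mulVec, dotProduct, Fin.sum_univ_three, of_apply, cons_val',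
      cons_val_fin_one, cons_val_zero, cons_val_one, cons_val]
    field_simp
    ring

theorem splitsOrConic_quadForm_zero (b c d e f : k) : SplitsOrConic (quadForm 0 b c d e f) := by
  rcases ne_or_eq c 0 with hc | rfl
  · exact splitsOrConic_quadForm_of_ne_zero b c d e f hc
  rcases ne_or_eq b 0 with hb | rfl
  · refine .of_mulVec !![1, 0, 0; 0, 0, 1; 0, 1, 0] (by simp [det_fin_three]) (fun v => ?_)
      (splitsOrConic_quadForm_of_ne_zero 0 b f e d hb)
    simp only [quadForm, mulVec, dotProduct, Fin.sum_univ_three, of_apply, cons_val',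
      cons_val_fin_one, cons_val_zero, cons_val_one, cons_val]
    ring
  rcases eq_or_ne d 0 with rfl | hd
  · exact .inl ⟨![0, 0, 1], ![0, e, f], fun v => by
      simp only [quadForm, dotProduct, Fin.sum_univ_three, cons_val_zero, cons_val_one, cons_val]
      ring⟩
  obtain ⟨r, hr⟩ := exists_quadratic_root hd e f
  exact .inl ⟨![0, 1, -r], ![0, d, e + d * r], fun v => by
    simp only [quadForm, dotProduct, Fin.sum_univ_three, cons_val_zero, cons_val_one, cons_val]
    linear_combination v 2 ^ 2 * hr⟩

theorem splitsOrConic_quadForm (a b c d e f : k) : SplitsOrConic (quadForm a b c d e f) := by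
  rcases eq_or_ne a 0 with rfl | ha
  · exact splitsOrConic_quadForm_zero b c d e f
  -- `(x, 0, 1)` is isotropic; making it the first basis vector kills the `v₀²` coefficient.
  obtain ⟨x, hx⟩ := exists_quadratic_root ha c f
  refine .of_mulVec !![x, 0, 1; 0, 1, 0; 1, 0, 0] (by simp [det_fin_three]) (fun v => ?_)
    (splitsOrConic_quadForm_zero (b * x + e) (2 * a * x + c) d b a)
  simp only [quadForm, mulVec, dotProduct, Fin.sum_univ_three, of_apply, cons_val',
    cons_val_fin_one, cons_val_zero, cons_val_one, cons_val]
  linear_combination v 0 ^ 2 * hx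

theorem splitsOrConic_eval_of_isHomogeneous {q : MvPolynomial (Fin 3) k}
    (hq : q.IsHomogeneous 2) : SplitsOrConic fun v => eval v q := by
  simp only [eval_eq_quadForm hq]
  exact splitsOrConic_quadForm ..

end QuadraticForm

section KroneckerWeierstrass

variable {k : Type*} [Field k] {n d : ℕ}

theorem IsRNC.finrank_eq {C : Set (Projectivization k (Fin (n + 1) → k))}
    {L : Submodule k (Fin (n + 1) → k)} (h : IsRNC k n d C L) : Module.finrank k L = d + 1 := by
  obtain ⟨A, hA, rfl, -⟩ := h
  rw [LinearMap.finrank_range_of_inj hA, Module.finrank_fin_fun]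

theorem IsRNC.subset_projSet {C : Set (Projectivization k (Fin (n + 1) → k))}
    {L : Submodule k (Fin (n + 1) → k)} (h : IsRNC k n d C L) : C ⊆ projSet k L := by
  obtain ⟨A, -, rfl, rfl⟩ := h
  rintro x ⟨s, t, c, hc, hx⟩
  change x.rep ∈ LinearMap.range A
  rw [← inv_smul_smul₀ hc x.rep, hx]
  exact Submodule.smul_mem _ _ (LinearMap.mem_range_self A _)

theorem IsRNC.isKWpos {C : Set (Projectivization k (Fin (n + 1) → k))}
    {L : Submodule k (Fin (n + 1) → k)} (h : IsRNC k n n C L) (hn : 1 ≤ n) :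
    IsKWpos k n n 0 C C :=
  ⟨hn, Fin.elim0, L, Fin.elim0, fun i => i.elim0, by simp, h, fun i => i.elim0,
    fun i => i.elim0, fun i => i.elim0, by simp⟩

theorem isRNC_projSet_of_finrank_eq_two {L : Submodule k (Fin (n + 1) → k)}
    (hL : Module.finrank k L = 2) : IsRNC k n 1 (projSet k L) L := by
  let e := (Module.finBasisOfFinrankEq k L hL).equivFun
  have hline (w : Fin 2 → k) : (fun i : Fin 2 => w 0 ^ (1 - (i : ℕ)) * w 1 ^ (i : ℕ)) = w := by
    funext i; fin_cases i <;> simp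
  refine ⟨L.subtype ∘ₗ e.symm.toLinearMap, L.injective_subtype.comp e.symm.injective, ?_, ?_⟩
  · rw [LinearMap.range_comp, LinearEquiv.range, Submodule.map_top, Submodule.range_subtype]
  ext x
  constructor
  · intro hx
    refine ⟨e ⟨x.rep, hx⟩ 0, e ⟨x.rep, hx⟩ 1, 1, one_ne_zero, ?_⟩
    simp [hline]
  · rintro ⟨s, t, c, hc, hx⟩
    change x.rep ∈ L
    rw [← inv_smul_smul₀ hc x.rep, hx]
    exact L.smul_mem _ (e.symm _).2

theorem projSet_eq_singleton_of_finrank_eq_one {U : Submodule k (Fin (n + 1) → k)}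
    (hU : Module.finrank k U = 1) : ∃ p, projSet k U = {p} := by
  obtain ⟨u, hu, hu0⟩ := Submodule.exists_mem_ne_zero_of_ne_bot
    (Submodule.one_le_finrank_iff.mp hU.ge)
  have hspan : U = k ∙ u :=
    (Submodule.eq_of_le_of_finrank_eq ((Submodule.span_singleton_le_iff_mem _ _).mpr hu)
      (by rw [hU, finrank_span_singleton hu0])).symm
  refine ⟨Projectivization.mk k u hu0, Set.ext fun x => ?_⟩
  rw [Set.mem_singleton_iff, ← Projectivization.mk_rep x,
    Projectivization.mk_eq_mk_iff' k _ _ x.rep_nonzero hu0]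
  simp only [projSet, Projectivization.mk_rep, Set.mem_ofPred_eq, hspan,
    Submodule.mem_span_singleton]

theorem isKWpos_projSet_union {L W : Submodule k (Fin (2 + 1) → k)}
    (hL : Module.finrank k L = 2) (hW : Module.finrank k W = 2) (hne : L ≠ W) :
    IsKWpos k 2 1 1 (projSet k L ∪ projSet k W) (projSet k L) := by
  obtain ⟨p, hp⟩ := projSet_eq_singleton_of_finrank_eq_one (U := L ⊓ W) <| by
    have := finrank_inf_add_two_of_ne (V := Fin (2 + 1) → k) (by simp [hL]) (by simp [hW]) hne
    simp only [Module.finrank_fin_fun] at this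
    omega
  have hpL : p ∈ projSet k L := (hp ▸ Set.mem_singleton p : p ∈ projSet k (L ⊓ W)).1
  refine ⟨le_rfl, fun _ => 1, L, fun _ => W, fun _ => ⟨le_rfl, le_rfl⟩, by simp,
    isRNC_projSet_of_finrank_eq_two hL, fun _ => hW, fun _ => ⟨p, hpL, hp⟩,
    fun i j hij => absurd (Subsingleton.elim i j) hij, by rw [Set.iUnion_const]⟩

theorem veronese_two (s t : k) :
    (fun i : Fin 3 => s ^ (2 - (i : ℕ)) * t ^ (i : ℕ)) = ![s ^ 2, s * t, t ^ 2] := by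
  funext i; fin_cases i <;> simp

theorem exists_smul_eq_veronese_two {u : Fin 3 → k} (hu : u ≠ 0)
    (h : u 0 * u 2 - u 1 ^ 2 = 0) : ∃ s t c : k, c ≠ 0 ∧ c • u = ![s ^ 2, s * t, t ^ 2] := by
  rcases eq_or_ne (u 0) 0 with h0 | h0
  · have h1 : u 1 = 0 := (pow_eq_zero_iff two_ne_zero).mp (by simpa [h0] using h)
    have h2 : u 2 ≠ 0 := fun h2 => hu (by ext i; fin_cases i <;> assumption)
    exact ⟨0, 1, (u 2)⁻¹, inv_ne_zero h2, by ext i; fin_cases i <;> simp [h0, h1, h2]⟩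
  refine ⟨1, u 1 / u 0, (u 0)⁻¹, inv_ne_zero h0, ?_⟩
  ext i; fin_cases i
  · simp [h0]
  · simp [div_eq_inv_mul]
  · simp only [Fin.reduceFinMk, Pi.smul_apply, smul_eq_mul, cons_val]
    field_simp
    linear_combination h

end KroneckerWeierstrass

def LiesOnConic (k : Type*) [Field k] (Z : Set (Projectivization k (Fin 3 → k))) : Prop :=
  ∃ q : MvPolynomial (Fin 3) k, q ≠ 0 ∧ q.IsHomogeneous 2 ∧ ∀ x ∈ Z, eval x.rep q = 0

section LiesOnConic

variable {k : Type*} [Field k]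

theorem LiesOnConic.mono {Y Z : Set (Projectivization k (Fin 3 → k))} (hY : LiesOnConic k Y)
    (hZY : Z ⊆ Y) : LiesOnConic k Z :=
  let ⟨q, hq0, hq2, hqY⟩ := hY
  ⟨q, hq0, hq2, fun x hx => hqY x (hZY hx)⟩

theorem liesOnConic_projSet_union {W₁ W₂ : Submodule k (Fin 3 → k)}
    (h₁ : Module.finrank k W₁ = 2) (h₂ : Module.finrank k W₂ = 2) :
    LiesOnConic k (projSet k W₁ ∪ projSet k W₂) := by
  have ne_top (W : Submodule k (Fin 3 → k)) (hW : Module.finrank k W = 2) : W ≠ ⊤ := by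
    rintro rfl
    simp at hW
  obtain ⟨q, hq0, hq2, hq⟩ := exists_quadric_vanishing_on_union (ne_top W₁ h₁) (ne_top W₂ h₂)
  exact ⟨q, hq0, hq2, fun x hx => hq x.rep hx⟩

theorem IsRNC.liesOnConic {C : Set (Projectivization k (Fin (2 + 1) → k))}
    {L : Submodule k (Fin (2 + 1) → k)} (h : IsRNC k 2 2 C L) : LiesOnConic k C := by
  obtain ⟨A, hA, -, rfl⟩ := h
  let E := LinearEquiv.ofInjectiveEndo A hA
  let P := LinearMap.toMatrix' E.symm.toLinearMap
  have heval (v : Fin 3 → k) : eval v (P.toMvPolynomial 0 * P.toMvPolynomial 2 -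
      P.toMvPolynomial 1 ^ 2) = E.symm v 0 * E.symm v 2 - E.symm v 1 ^ 2 := by
    simp [toMvPolynomial_eval_eq_apply, P, LinearMap.toMatrix'_mulVec]
  refine ⟨_, fun h => ?_, ((P.toMvPolynomial_isHomogeneous 0).mul
    (P.toMvPolynomial_isHomogeneous 2)).sub ((P.toMvPolynomial_isHomogeneous 1).pow 2), ?_⟩
  · simpa [h] using heval (E ![1, 0, 1])
  · rintro x ⟨s, t, c, hc, hx⟩
    have hx' : E.symm x.rep = c⁻¹ • ![s ^ 2, s * t, t ^ 2] := by
      rw [LinearEquiv.symm_apply_eq, map_smul, ← inv_smul_smul₀ hc x.rep, hx, ← veronese_two]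
      rfl
    rw [heval, hx']
    simp only [Pi.smul_apply, smul_eq_mul, cons_val_zero, cons_val_one, cons_val]
    ring

theorem liesOnConic_of_isKWpos {d s : ℕ} {Y C : Set (Projectivization k (Fin (2 + 1) → k))}
    (h : IsKWpos k 2 d s Y C) : LiesOnConic k Y := by
  obtain ⟨hd, nn, L, W, hnn, hsum, hC, hW, -, -, rfl⟩ := h
  have hnn1 (i : Fin s) : nn i = 1 := by have := hnn i; omega
  simp only [hnn1, Finset.sum_const, Finset.card_univ, Fintype.card_fin, smul_eq_mul,
    mul_one] at hsum
  obtain ⟨rfl, rfl⟩ | ⟨rfl, rfl⟩ : d = 1 ∧ s = 1 ∨ d = 2 ∧ s = 0 := by omega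
  · refine (liesOnConic_projSet_union (W₂ := W 0) hC.finrank_eq (by rw [hW, hnn1])).mono ?_
    rintro x (hx | hx)
    · exact .inl (hC.subset_projSet hx)
    · obtain ⟨i, hi⟩ := Set.mem_iUnion.mp hx
      exact .inr (Subsingleton.elim i 0 ▸ hi)
  · simpa using hC.liesOnConic

theorem liesOnConic_of_isKW0 {s : ℕ} {Y : Set (Projectivization k (Fin (2 + 1) → k))}
    {y : Projectivization k (Fin (2 + 1) → k)} (h : IsKW0 k 2 s Y y) : LiesOnConic k Y := by
  obtain ⟨nn, W, hnn, hsum, hW, -, -, rfl⟩ := h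
  have hnn1 (i : Fin s) : nn i = 1 := by have := hnn i; omega
  simp only [hnn1, Finset.sum_const, Finset.card_univ, Fintype.card_fin, smul_eq_mul,
    mul_one] at hsum
  subst hsum
  refine (liesOnConic_projSet_union (W₁ := W 0) (W₂ := W 1) (by rw [hW, hnn1])
    (by rw [hW, hnn1])).mono ?_
  intro x hx
  obtain ⟨i, hi⟩ := Set.mem_iUnion.mp hx
  fin_cases i
  exacts [.inl hi, .inr hi]

theorem exists_isKWpos_of_liesOnConic [IsAlgClosed k]
    {Z : Set (Projectivization k (Fin (2 + 1) → k))}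
    (hline : ¬∃ W : Submodule k (Fin (2 + 1) → k), Module.finrank k W = 2 ∧ Z ⊆ projSet k W)
    (hZ : LiesOnConic k Z) : ∃ d s Y C, Z ⊆ Y ∧ IsKWpos k 2 d s Y C := by
  obtain ⟨q, hq0, hq2, hqZ⟩ := hZ
  obtain ⟨v₀, hv₀⟩ : ∃ v, eval v q ≠ 0 := by
    by_contra! h
    exact hq0 (MvPolynomial.funext fun v => by simp [h])
  rcases splitsOrConic_eval_of_isHomogeneous hq2 with ⟨a, b, hab⟩ | ⟨A, hA⟩
  · let plane (c : Fin 3 → k) := LinearMap.ker (dotProductEquiv k (Fin 3) c)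
    have ha : a ≠ 0 := by rintro rfl; simp [hab] at hv₀
    have hb : b ≠ 0 := by rintro rfl; simp [hab] at hv₀
    have hplane {c : Fin 3 → k} (hc : c ≠ 0) : Module.finrank k (plane c) = 2 := by
      have := finrank_ker_dotProductEquiv_add_one hc
      simp only [plane, Fintype.card_fin] at this ⊢
      omega
    have hZ : Z ⊆ projSet k (plane a) ∪ projSet k (plane b) := fun x hx =>
      mul_eq_zero.mp ((hab x.rep).symm.trans (hqZ x hx))
    have hne : plane a ≠ plane b := fun h =>
      hline ⟨plane a, hplane ha, by simpa [h] using hZ⟩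
    exact ⟨1, 1, _, _, hZ, isKWpos_projSet_union (hplane ha) (hplane hb) hne⟩
  · refine ⟨2, 0, _, _, ?_, IsRNC.isKWpos ⟨A.toLinearMap, A.injective, rfl, rfl⟩ one_le_two⟩
    intro x hx
    obtain ⟨s, t, c, hc, hu⟩ := exists_smul_eq_veronese_two (u := A.symm x.rep)
      (by simpa using x.rep_nonzero) ((hA _).symm.trans (by simpa using hqZ x hx))
    refine ⟨s, t, c, hc, ?_⟩
    rw [veronese_two, ← hu, map_smul]
    simp

end LiesOnConic

theorem statement8_general (k : Type*) [Field k] [IsAlgClosed k]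
    (Z : Set (Projectivization k (Fin (2 + 1) → k)))
    (hline : ¬∃ W : Submodule k (Fin (2 + 1) → k),
        Module.finrank k W = 2 ∧ Z ⊆ projSet k W) :
    (∃ (d s : ℕ) (Y : Set (Projectivization k (Fin (2 + 1) → k))), Z ⊆ Y ∧
        ((∃ C, IsKWpos k 2 d s Y C) ∨
          (d = 0 ∧ ∃ y, IsKW0 k 2 s Y y ∧ y ∉ Z))) ↔
    (∃ q : MvPolynomial (Fin (2 + 1)) k, q ≠ 0 ∧ q.IsHomogeneous 2 ∧
      ∀ x ∈ Z, MvPolynomial.eval x.rep q = 0) := by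
  constructor
  · rintro ⟨d, s, Y, hZY, ⟨C, hY⟩ | ⟨-, y, hY, -⟩⟩
    · exact (liesOnConic_of_isKWpos hY).mono hZY
    · exact (liesOnConic_of_isKW0 hY).mono hZY
  · intro hZ
    obtain ⟨d, s, Y, C, hZY, hY⟩ := exists_isKWpos_of_liesOnConic hline hZ
    exact ⟨d, s, Y, hZY, .inl ⟨C, hY⟩⟩

/-- Let `Z ⊂ ℙ₂` be a finite set of points not contained in any
line. Then `Z` is contained in some Kronecker–Weierstrass variety of `ℙ₂` whose
distinguished point (in the case of type `(0;2)`) does not lie in `Z`, if and only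
if there exists a nonzero homogeneous quadratic form in `k[z₀,z₁,z₂]` vanishing on
every point of `Z`. -/
theorem statement8 (k : Type*) [Field k] [IsAlgClosed k]
    (Z : Set (Projectivization k (Fin (2 + 1) → k))) (hfin : Z.Finite)
    (hline : ¬∃ W : Submodule k (Fin (2 + 1) → k),
        Module.finrank k W = 2 ∧ Z ⊆ projSet k W) :
    (∃ (d s : ℕ) (Y : Set (Projectivization k (Fin (2 + 1) → k))), Z ⊆ Y ∧
        ((∃ C, IsKWpos k 2 d s Y C) ∨
          (d = 0 ∧ ∃ y, IsKW0 k 2 s Y y ∧ y ∉ Z))) ↔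
    (∃ q : MvPolynomial (Fin (2 + 1)) k, q ≠ 0 ∧ q.IsHomogeneous 2 ∧
      ∀ x ∈ Z, MvPolynomial.eval x.rep q = 0) :=
  statement8_general k Z hline
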